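/- Let H be the subgroup of B4 generated by σ1, σ3 and (σ3σ2σ3)² (the centralizer of σ3 in B4), and let ρ : B4 → B3 be the homomorphism with ρ(σ1) = ρ(σ3) = τ2 and ρ(σ2) = τ1. Then H ∩ ker ρ is the subgroup generated by b1 and b2 b1 b2⁻¹, and every element of H can be written uniquely in the form u·σ3^m·((σ3σ2σ3)²)^k with u ∈ ⟨b1, b2 b1 b2⁻¹⟩ and m, k ∈ ℤ (so H is the semidirect product ⟨b1, b2 b1 b2⁻¹⟩ ⋊ ⟨σ3, (σ3σ2σ3)²⟩). -/

import Mathlib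

noncomputable section

/-- The braid relations for the braid group `B₄` on three generators
`σ1 = 0`, `σ2 = 1`, `σ3 = 2`. -/
def braidRels3 : Set (FreeGroup (Fin 3)) :=
  { FreeGroup.of 0 * FreeGroup.of 1 * FreeGroup.of 0 *
      (FreeGroup.of 1 * FreeGroup.of 0 * FreeGroup.of 1)⁻¹,
    FreeGroup.of 1 * FreeGroup.of 2 * FreeGroup.of 1 *
      (FreeGroup.of 2 * FreeGroup.of 1 * FreeGroup.of 2)⁻¹,
    FreeGroup.of 0 * FreeGroup.of 2 * (FreeGroup.of 2 * FreeGroup.of 0)⁻¹ }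

/-- The braid group on 4 strands, presented by generators and relations. -/
abbrev B4 : Type := PresentedGroup braidRels3

/-- The standard generators of `B₄`. -/
def σ (i : Fin 3) : B4 := PresentedGroup.of i

/-- The braid relation for the braid group `B₃` on two generators `τ1 = 0`, `τ2 = 1`. -/
def braidRels2 : Set (FreeGroup (Fin 2)) :=
  { FreeGroup.of 0 * FreeGroup.of 1 * FreeGroup.of 0 *
      (FreeGroup.of 1 * FreeGroup.of 0 * FreeGroup.of 1)⁻¹ }

/-- The braid group on 3 strands, presented by generators and relations. -/
abbrev B3 : Type := PresentedGroup braidRels2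

/-- The standard generators of `B₃`. -/
def τ (i : Fin 2) : B3 := PresentedGroup.of i

/-- The braid `b1 = σ1 σ3⁻¹`. -/
def b1 : B4 := σ 0 * (σ 2)⁻¹

/-- The braid `b2 = σ1 σ2 σ3 σ1⁻¹ σ2⁻¹ σ1⁻¹`. -/
def b2 : B4 := σ 0 * σ 1 * σ 2 * (σ 0)⁻¹ * (σ 1)⁻¹ * (σ 0)⁻¹

/-- The centralizer of `σ3` in `B₄`: the subgroup generated by `σ1`, `σ3`
and `(σ3 σ2 σ3)²`. -/
def centralizerσ3 : Subgroup B4 :=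
  Subgroup.closure {σ 0, σ 2, (σ 2 * σ 1 * σ 2) ^ 2}

/-- The subgroup of `B₄` generated by `b1` and `b2 b1 b2⁻¹`. -/
def K : Subgroup B4 := Subgroup.closure {b1, b2 * b1 * b2⁻¹}

/-! Conjugation by the Garside element `Δ = σ1 σ2 σ1 σ3 σ2 σ1` exchanges `σ1` and `σ3`, so `Δ²` is
central. Writing `δ = (σ3 σ2 σ3)²`, one finds `b2 = δ⁻¹ Δ`, hence `b2 b1 b2⁻¹ = δ⁻¹ b1⁻¹ δ`, and
`(δ b1)² = Δ²`. The latter identity makes `δ` normalize `K = ⟨b1, δ⁻¹ b1⁻¹ δ⟩`, while `σ3`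
centralizes it; since `σ1 = b1 σ3`, every element of `H` is `u σ3^m δ^k` with `u ∈ K`. As
`K ≤ ker ρ`, both the uniqueness and `H ∩ ker ρ = K` reduce to `(m, k) ↦ ρ (σ3^m δ^k)` being
injective: in `SL(2, ℤ)` the image of `ρ σ3 = τ2` is the unipotent `T` and that of `ρ δ` is `-1`,
which forces `m = 0`, and then the exponent sum `6k` forces `k = 0`. -/

open Subgroup
open scoped MatrixGroups

section GroupLemmas

variable {G : Type*} [Group G]

-- The hypothesis says `(z x)² = (x z)²`, which gives `z x z⁻¹ = x⁻¹ (z⁻¹ x z) x`.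
theorem mem_normalizer_closure_pair_of_commute_sq {x z : G} (h : Commute z ((z * x) ^ 2)) :
    z ∈ normalizer (closure {x, z⁻¹ * x⁻¹ * z} : Set G) := by
  set w := z⁻¹ * x⁻¹ * z
  set L := closure {x, w}
  have hx : x ∈ L := subset_closure (by simp)
  have hw : w ∈ L := subset_closure (by simp)
  have hzx : z * x * (z * x) = x * z * (x * z) :=
    calc z * x * (z * x) = z⁻¹ * (z * (z * x) ^ 2) := by rw [pow_two]; group
      _ = z⁻¹ * ((z * x) ^ 2 * z) := by rw [h.eq]
      _ = x * z * (x * z) := by rw [pow_two]; group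
  have hconj_x : z * x * z⁻¹ = x⁻¹ * w⁻¹ * x :=
    calc z * x * z⁻¹ = x⁻¹ * z⁻¹ * (z * x * (z * x)) * z⁻¹ := by group
      _ = x⁻¹ * w⁻¹ * x := by rw [hzx]; simp only [w]; group
  have hconj_w : z⁻¹ * w * z = w⁻¹ * x⁻¹ * w :=
    calc z⁻¹ * w * z = z⁻¹ * z⁻¹ * x⁻¹ * (z * x * (z * x)) * x⁻¹ * z⁻¹ * x⁻¹ * z := by
          simp only [w]; group
      _ = w⁻¹ * x⁻¹ * w := by rw [hzx]; simp only [w]; group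
  rw [mem_normalizer_iff_map_conj_eq]
  refine le_antisymm (map_le_iff_le_comap.mpr <| (closure_le _).mpr ?_) ((closure_le _).mpr ?_)
  · rintro _ (rfl | rfl) <;> simp only [SetLike.mem_coe, mem_comap, MonoidHom.coe_coe,
      MulAut.conj_apply]
    · rw [hconj_x]; exact mul_mem (mul_mem (inv_mem hx) (inv_mem hw)) hx
    · simpa [w, mul_assoc] using inv_mem hx
  · rintro _ (rfl | rfl)
    · exact ⟨w⁻¹, inv_mem hw, by simp [w, mul_assoc]⟩
    · refine ⟨w⁻¹ * x⁻¹ * w, mul_mem (mul_mem (inv_mem hw) (inv_mem hx)) hw, ?_⟩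
      simp only [MonoidHom.coe_coe, MulAut.conj_apply, ← hconj_w]
      group

variable {G' A : Type*} [Group G'] [Group A] {N : Subgroup G} {ρ : G →* G'} {φ : A →* G}

theorem exists_mul_eq_of_mem_sup_range (hN : φ.range ≤ normalizer (N : Set G)) {g : G}
    (hg : g ∈ N ⊔ φ.range) : ∃ u ∈ N, ∃ t, u * φ t = g := by
  rw [← SetLike.mem_coe, coe_mul_of_right_le_normalizer_left N φ.range hN] at hg
  obtain ⟨u, hu, _, ⟨t, rfl⟩, rfl⟩ := hg
  exact ⟨u, hu, t, rfl⟩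

theorem eq_and_eq_of_mul_eq_mul (hker : N ≤ ρ.ker) (hφ : Function.Injective (ρ.comp φ))
    {u u' : G} (hu : u ∈ N) (hu' : u' ∈ N) {t t' : A} (h : u * φ t = u' * φ t') :
    u = u' ∧ t = t' := by
  obtain rfl : t = t' := hφ <| by
    simpa [MonoidHom.mem_ker.mp (hker hu), MonoidHom.mem_ker.mp (hker hu')] using congrArg ρ h
  exact ⟨mul_right_cancel h, rfl⟩

theorem sup_range_inf_ker (hker : N ≤ ρ.ker) (hN : φ.range ≤ normalizer (N : Set G))
    (hφ : Function.Injective (ρ.comp φ)) : (N ⊔ φ.range) ⊓ ρ.ker = N := by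
  refine le_antisymm (fun g ⟨hg, hg_ker⟩ => ?_) (le_inf le_sup_left hker)
  obtain ⟨u, hu, t, rfl⟩ := exists_mul_eq_of_mem_sup_range hN hg
  have ht : t = 1 := hφ <| by simpa [MonoidHom.mem_ker.mp (hker hu)] using hg_ker
  simpa [ht] using hu

end GroupLemmas

def lowerT : SL(2, ℤ) := ⟨!![1, 0; -1, 1], by decide⟩

def braidToSL2 : B3 →* SL(2, ℤ) :=
  PresentedGroup.toGroup (f := ![lowerT, ModularGroup.T]) <| by
    rintro r rfl
    simp only [map_mul, map_inv, FreeGroup.lift_apply_of, mul_inv_eq_one]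
    exact Subtype.ext (by decide)

def exponentSum : B3 →* Multiplicative ℤ :=
  PresentedGroup.toGroup (f := fun _ => Multiplicative.ofAdd (1 : ℤ)) <| by
    rintro r rfl
    simp only [map_mul, map_inv, FreeGroup.lift_apply_of]
    group

theorem braidToSL2_τ1 : braidToSL2 (τ 1) = ModularGroup.T := PresentedGroup.toGroup.of _

theorem braidToSL2_fullTwist : braidToSL2 ((τ 1 * τ 0 * τ 1) ^ 2) = -1 := by
  simp only [map_pow, map_mul, τ, braidToSL2, PresentedGroup.toGroup.of]
  exact Subtype.ext (by decide)

theorem exponentSum_τ (i : Fin 2) : exponentSum (τ i) = Multiplicative.ofAdd 1 :=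
  PresentedGroup.toGroup.of _

theorem eq_zero_of_τ1_zpow_mul_fullTwist_zpow_eq_one {m k : ℤ}
    (h : τ 1 ^ m * ((τ 1 * τ 0 * τ 1) ^ 2) ^ k = 1) : m = 0 ∧ k = 0 := by
  have hm : m = 0 := by
    have := congrArg (fun g => (braidToSL2 g : Matrix (Fin 2) (Fin 2) ℤ) 0 1) h
    simp only [map_mul, map_zpow, braidToSL2_τ1, braidToSL2_fullTwist, neg_one_zpow_eq_ite] at this
    split_ifs at this <;> simpa [ModularGroup.coe_T_zpow] using this
  subst hm
  simpa [exponentSum_τ] using congrArg (fun g => (exponentSum g).toAdd) h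

section Words

local notation "a" => σ 0
local notation "b" => σ 1
local notation "c" => σ 2

theorem σ_braid_01 : a * b * a = b * a * b :=
  PresentedGroup.mk_eq_mk_of_mul_inv_mem (by simp [braidRels3])

theorem σ_braid_12 : b * c * b = c * b * c :=
  PresentedGroup.mk_eq_mk_of_mul_inv_mem (by simp [braidRels3])

theorem commute_σ0_σ2 : Commute a c :=
  PresentedGroup.mk_eq_mk_of_mul_inv_mem (by simp [braidRels3])

def braidFlip : B4 →* B4 :=
  PresentedGroup.toGroup (f := ![c, b, a]) <| by
    rintro r (rfl | rfl | rfl) <;> simp only [map_mul, map_inv, FreeGroup.lift_apply_of] <;>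
      simp only [Matrix.cons_val, mul_inv_eq_one]
    exacts [σ_braid_12.symm, σ_braid_01.symm, commute_σ0_σ2.symm.eq]

@[simp] theorem braidFlip_σ0 : braidFlip a = c := PresentedGroup.toGroup.of _
@[simp] theorem braidFlip_σ1 : braidFlip b = b := PresentedGroup.toGroup.of _
@[simp] theorem braidFlip_σ2 : braidFlip c = a := PresentedGroup.toGroup.of _

theorem braidFlip_braidFlip (g : B4) : braidFlip (braidFlip g) = g := by
  suffices braidFlip.comp braidFlip = MonoidHom.id B4 from DFunLike.congr_fun this g
  refine PresentedGroup.ext fun i => ?_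
  change braidFlip (braidFlip (σ i)) = σ i
  fin_cases i <;> simp

def garside : B4 := a * b * a * c * b * a

theorem garside_eq : garside = a * b * c * (a * b * a) := by
  rw [garside, mul_assoc (a * b) a c, commute_σ0_σ2.eq]
  group

theorem σ012_mul_σ0 : a * b * c * a = b * (a * b * c) := by
  rw [mul_assoc _ c a, ← commute_σ0_σ2.eq, ← mul_assoc, σ_braid_01]
  group

theorem σ012_mul_σ1 : a * b * c * b = c * (a * b * c) := by
  rw [mul_assoc a b c, mul_assoc a, σ_braid_12, ← mul_assoc, ← mul_assoc, commute_σ0_σ2.eq]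
  group

theorem σ010_mul_σ0 : a * b * a * a = b * (a * b * a) := by
  nth_rw 1 [σ_braid_01]; group

theorem σ010_mul_σ1 : a * b * a * b = a * (a * b * a) := by
  nth_rw 2 [σ_braid_01]; group

theorem σ210_mul_σ2 : c * b * a * c = b * (c * b * a) := by
  rw [mul_assoc _ a c, commute_σ0_σ2.eq, ← mul_assoc, ← σ_braid_12]
  group

theorem σ210_mul_σ1 : c * b * a * b = a * (c * b * a) := by
  rw [mul_assoc c b a, mul_assoc c, ← σ_braid_01, ← mul_assoc, ← mul_assoc, ← commute_σ0_σ2.eq]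
  group

theorem garside_mul_σ0 : garside * a = c * garside := by
  rw [garside_eq, mul_assoc, σ010_mul_σ0, ← mul_assoc, σ012_mul_σ1, mul_assoc]

theorem garside_mul_σ1 : garside * b = b * garside := by
  rw [garside_eq, mul_assoc, σ010_mul_σ1, ← mul_assoc, σ012_mul_σ0, mul_assoc]

theorem garside_mul_σ2 : garside * c = a * garside := by
  rw [garside, show a * b * a * c * b * a = a * b * a * (c * b * a) by group, mul_assoc,
    σ210_mul_σ2, ← mul_assoc, σ010_mul_σ1, mul_assoc]

theorem garside_conj (g : B4) : garside * g * garside⁻¹ = braidFlip g := by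
  suffices (MulAut.conj garside).toMonoidHom = braidFlip from DFunLike.congr_fun this g
  refine PresentedGroup.ext fun i => ?_
  change garside * σ i * garside⁻¹ = braidFlip (σ i)
  rw [mul_inv_eq_iff_eq_mul]
  fin_cases i
  exacts [garside_mul_σ0, garside_mul_σ1, garside_mul_σ2]

theorem braidFlip_garside : braidFlip garside = garside := by
  rw [← garside_conj]; group

theorem commute_garside_sq (g : B4) : Commute (garside ^ 2) g := by
  refine mul_inv_eq_iff_eq_mul.mp ?_
  calc garside ^ 2 * g * (garside ^ 2)⁻¹ = garside * (garside * g * garside⁻¹) * garside⁻¹ := by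
        rw [pow_two]; group
    _ = g := by rw [garside_conj, garside_conj, braidFlip_braidFlip]

def δ : B4 := (c * b * c) ^ 2

theorem commute_σ2_δ : Commute c δ := by
  rw [Commute, SemiconjBy, δ, pow_two]
  nth_rw 1 [← σ_braid_12]
  nth_rw 3 [← σ_braid_12]
  group

theorem δ_eq : δ = b * c * c * (b * c * c) := by
  rw [δ, pow_two]
  nth_rw 1 [← σ_braid_12]
  rw [show b * c * b * (c * b * c) = b * c * (b * c * b) * c by group, σ_braid_12]
  group

theorem b2_eq : b2 = δ⁻¹ * garside := by
  have h : garside * (a * b * a) ^ 2 * garside⁻¹ = δ := by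
    rw [garside_conj]; simp [δ]
  calc b2 = garside * ((a * b * a) ^ 2)⁻¹ := by rw [garside_eq, b2, pow_two]; group
    _ = (garside * (a * b * a) ^ 2 * garside⁻¹)⁻¹ * garside := by group
    _ = δ⁻¹ * garside := by rw [h]

theorem garside_conj_b1 : garside * b1 * garside⁻¹ = b1⁻¹ := by
  simp [garside_conj, b1]

theorem b2_conj_b1 : b2 * b1 * b2⁻¹ = δ⁻¹ * b1⁻¹ * δ := by
  calc b2 * b1 * b2⁻¹ = δ⁻¹ * (garside * b1 * garside⁻¹) * δ := by rw [b2_eq]; group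
    _ = δ⁻¹ * b1⁻¹ * δ := by rw [garside_conj_b1]

theorem garside_sq : garside ^ 2 = δ * (a * b * c * (c * b * a)) := by
  have h : garside = c * b * c * (a * b * c) := by
    rw [← braidFlip_garside]
    simp only [garside, map_mul, braidFlip_σ0, braidFlip_σ1, braidFlip_σ2]
    group
  calc garside ^ 2 = c * b * c * (a * b * c * (a * b * a)) * (c * b * a) := by
        rw [pow_two]; nth_rw 1 [h]; rw [garside]; group
    _ = c * b * c * garside * (c * b * a) := by rw [garside_eq]
    _ = δ * (a * b * c * (c * b * a)) := by rw [h, δ, pow_two]; group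

theorem δ_mul_b1_sq : (δ * b1) ^ 2 = garside ^ 2 := by
  have h : (δ * a) ^ 2 = garside ^ 2 * c ^ 2 :=
    calc (δ * a) ^ 2 = δ * (a * b * c * c * b * (c ^ 2 * a)) := by
          rw [pow_two, pow_two]; nth_rw 2 [δ_eq]; group
      _ = δ * (a * b * c * c * b * (a * c ^ 2)) := by
          rw [(commute_σ0_σ2.symm.pow_left 2).eq]
      _ = garside ^ 2 * c ^ 2 := by rw [garside_sq]; group
  have hc : Commute (δ * a) c⁻¹ := (commute_σ2_δ.symm.mul_left commute_σ0_σ2).inv_right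
  rw [b1, ← mul_assoc, hc.mul_pow, h]
  group

end Words

theorem commute_σ2_b1 : Commute (σ 2) b1 :=
  commute_σ0_σ2.symm.mul_right (Commute.refl _).inv_right

def σ2δHom : Multiplicative ℤ × Multiplicative ℤ →* B4 :=
  (zpowersHom B4 (σ 2)).noncommCoprod (zpowersHom B4 δ) fun _ _ => commute_σ2_δ.zpow_zpow _ _

theorem σ2δHom_apply (m k : Multiplicative ℤ) :
    σ2δHom (m, k) = σ 2 ^ m.toAdd * δ ^ k.toAdd := rfl

theorem K_eq_closure : K = closure {b1, δ⁻¹ * b1⁻¹ * δ} := by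
  rw [K, b2_conj_b1]

theorem σ2_mem_normalizer_K : σ 2 ∈ normalizer (K : Set B4) := by
  refine centralizer_le_normalizer _ ?_
  rw [K_eq_closure, centralizer_closure, mem_centralizer_iff]
  rintro _ (rfl | rfl)
  exacts [commute_σ2_b1.eq.symm,
    ((commute_σ2_δ.inv_right.mul_right commute_σ2_b1.inv_right).mul_right commute_σ2_δ).eq.symm]

theorem δ_mem_normalizer_K : δ ∈ normalizer (K : Set B4) := by
  rw [K_eq_closure]
  refine mem_normalizer_closure_pair_of_commute_sq ?_
  rw [δ_mul_b1_sq]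
  exact (commute_garside_sq δ).symm

theorem range_σ2δHom_le_normalizer_K : σ2δHom.range ≤ normalizer (K : Set B4) := by
  rintro _ ⟨⟨m, k⟩, rfl⟩
  exact mul_mem (zpow_mem σ2_mem_normalizer_K _) (zpow_mem δ_mem_normalizer_K _)

theorem centralizerσ3_eq_sup : centralizerσ3 = K ⊔ σ2δHom.range := by
  have hσ2 : σ 2 ∈ σ2δHom.range := ⟨(.ofAdd 1, 1), by simp [σ2δHom_apply]⟩
  have hδ : δ ∈ σ2δHom.range := ⟨(1, .ofAdd 1), by simp [σ2δHom_apply]⟩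
  have hb1 : b1 ∈ K := subset_closure (by simp)
  have hσ0H : σ 0 ∈ centralizerσ3 := subset_closure (by simp)
  have hσ2H : σ 2 ∈ centralizerσ3 := subset_closure (by simp)
  have hδH : δ ∈ centralizerσ3 := subset_closure (by simp [δ])
  have hb1H : b1 ∈ centralizerσ3 := mul_mem hσ0H (inv_mem hσ2H)
  refine le_antisymm ((closure_le _).mpr ?_) (sup_le ((closure_le _).mpr ?_) ?_)
  · rintro _ (rfl | rfl | rfl)
    · rw [show σ 0 = b1 * σ 2 by rw [b1, inv_mul_cancel_right]]
      exact mul_mem (mem_sup_left hb1) (mem_sup_right hσ2)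
    exacts [mem_sup_right hσ2, mem_sup_right hδ]
  · rintro _ (rfl | rfl)
    · exact hb1H
    · rw [SetLike.mem_coe, b2_conj_b1]
      exact mul_mem (mul_mem (inv_mem hδH) (inv_mem hb1H)) hδH
  · rintro _ ⟨⟨m, k⟩, rfl⟩
    exact mul_mem (zpow_mem hσ2H _) (zpow_mem hδH _)

theorem K_le_ker {G : Type*} [Group G] (ρ : B4 →* G) (h : ρ b1 = 1) : K ≤ ρ.ker := by
  refine (closure_le _).mpr ?_
  rintro _ (rfl | rfl)
  exacts [h, ρ.normal_ker.conj_mem _ h _]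

theorem injective_comp_σ2δHom (ρ : B4 →* B3) (hρ2 : ρ (σ 1) = τ 0) (hρ3 : ρ (σ 2) = τ 1) :
    Function.Injective (ρ.comp σ2δHom) := by
  rw [injective_iff_map_eq_one]
  rintro ⟨m, k⟩ h
  simp only [MonoidHom.comp_apply, σ2δHom_apply, δ, map_mul, map_zpow, map_pow, hρ2, hρ3] at h
  obtain ⟨hm, hk⟩ := eq_zero_of_τ1_zpow_mul_fullTwist_zpow_eq_one h
  exact Prod.ext hm hk

/-- let `H = ⟨σ1, σ3, (σ3 σ2 σ3)²⟩` (the centralizer of `σ3` in `B₄`)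
and let `ρ : B₄ → B₃` be the Gorin–Lin quotient with `ρ(σ1) = ρ(σ3) = τ2`,
`ρ(σ2) = τ1`.  Then `H ∩ ker ρ = ⟨b1, b2 b1 b2⁻¹⟩`, and every element of `H` is
uniquely of the form `u · σ3^m · ((σ3 σ2 σ3)²)^k` with `u ∈ ⟨b1, b2 b1 b2⁻¹⟩` and
`m, k ∈ ℤ`; i.e. `H = ⟨b1, b2 b1 b2⁻¹⟩ ⋊ ⟨σ3, (σ3 σ2 σ3)²⟩`. -/
theorem statement10
    (ρ : B4 →* B3) (hρ1 : ρ (σ 0) = τ 1) (hρ2 : ρ (σ 1) = τ 0) (hρ3 : ρ (σ 2) = τ 1) :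
    K = centralizerσ3 ⊓ ρ.ker ∧
      ∀ h ∈ centralizerσ3,
        ∃! x : K × ℤ × ℤ,
          h = (x.1 : B4) * σ 2 ^ x.2.1 * ((σ 2 * σ 1 * σ 2) ^ 2) ^ x.2.2 := by
  have hK := K_le_ker ρ (by simp [b1, hρ1, hρ3])
  have hN := range_σ2δHom_le_normalizer_K
  have hinj := injective_comp_σ2δHom ρ hρ2 hρ3
  change _ ∧ ∀ h ∈ centralizerσ3, ∃! x : K × ℤ × ℤ, h = (x.1 : B4) * σ 2 ^ x.2.1 * δ ^ x.2.2
  rw [centralizerσ3_eq_sup]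
  refine ⟨(sup_range_inf_ker hK hN hinj).symm, fun h hh => ?_⟩
  obtain ⟨u, hu, ⟨m, k⟩, rfl⟩ := exists_mul_eq_of_mem_sup_range hN hh
  refine ⟨(⟨u, hu⟩, m.toAdd, k.toAdd), by simp [σ2δHom_apply, mul_assoc], ?_⟩
  rintro ⟨u', m', k'⟩ h'
  obtain ⟨hu', hmk⟩ := eq_and_eq_of_mul_eq_mul hK hinj hu u'.2 (t' := (.ofAdd m', .ofAdd k'))
    (by rw [h', σ2δHom_apply, mul_assoc]; rfl)
  obtain ⟨rfl, rfl⟩ := Prod.mk.inj hmk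
  exact Prod.ext (Subtype.ext hu'.symm) rfl
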